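/- For every integer p ≥ 1 and every n ≥ 1, every eigenvalue λ ∈ ℝ of the adjacency matrix A_n of the n-th Schreier graph of 𝒢_{S_p} satisfies −2 ≤ λ ≤ 2p. -/

import Mathlib

open Polynomial Matrix

/-- The action of the generator `e_i` of the star automaton group `𝒢_{S_p}` on
words of length `n` over the alphabet `X = {0, 1, …, p}`. -/
def starWord (p : ℕ) (i : Fin (p + 1)) : (n : ℕ) → (Fin n → Fin (p + 1)) → Fin n → Fin (p + 1)
  | 0, w => w
  | n + 1, w =>
    if w 0 = 0 then Fin.cons i (starWord p i n (Fin.tail w))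
    else if w 0 = i then Fin.cons 0 (Fin.tail w)
    else w

/-- The real permutation matrix of `e_i^{(n)}`. -/
noncomputable def starMat (p n : ℕ) (i : Fin (p + 1)) :
    Matrix (Fin n → Fin (p + 1)) (Fin n → Fin (p + 1)) ℝ :=
  fun u v => if starWord p i n u = v then 1 else 0

/-- The adjacency matrix `A_n = Σ_{i=1}^p (M_{i,n} + M_{i,n}ᵀ)` of the `n`-th
Schreier graph of the star automaton group `𝒢_{S_p}`. -/
noncomputable def starAdj (p n : ℕ) :
    Matrix (Fin n → Fin (p + 1)) (Fin n → Fin (p + 1)) ℝ :=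
  ∑ i : Fin p, (starMat p n i.succ + (starMat p n i.succ)ᵀ)

/-! The quadratic form of `A_n` is `2 Σ_i Σ_u x(u) x(e_i u)`. Each `e_i` permutes the words,
so `x(u) x(e_i u) ≤ (x(u)² + x(e_i u)²)/2` sums to `‖x‖²` and gives `λ ≤ 2p`. For the lower bound
write a word of length `n + 1` as `a·t`: `e_i` sends `0t ↦ i·e_i(t)` and `it ↦ 0t` and fixes all
other words, which turns the form at level `n + 1` into the sum of squares
`2p (Σ_i Σ_u x(u) x(e_i u) + ‖x‖²) = Σ_i Σ_t ((p x(it) + x(0t))² + (p x(i·e_i t) + x(0t))²)`,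
so `λ ≥ -2`. -/

lemma sum_pi_fin_succ {α M : Type*} [Fintype α] [AddCommMonoid M] {n : ℕ}
    (f : (Fin (n + 1) → α) → M) :
    ∑ u, f u = ∑ a, ∑ t : Fin n → α, f (Fin.cons a t) := by
  rw [← (Fin.consEquiv fun _ => α).sum_comp, Fintype.sum_prod_type]
  rfl

lemma sum_mul_comp_le_sum_sq {α : Type*} [Fintype α] {σ : α → α} (hσ : σ.Bijective)
    (x : α → ℝ) : ∑ u, x u * x (σ u) ≤ ∑ u, x u ^ 2 := by
  have h : ∑ u, 2 * (x u * x (σ u)) ≤ ∑ u, (x u ^ 2 + x (σ u) ^ 2) :=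
    Finset.sum_le_sum fun u _ => by linarith [two_mul_le_add_sq (x u) (x (σ u))]
  rw [← Finset.mul_sum, Finset.sum_add_distrib, hσ.sum_comp (fun u => x u ^ 2)] at h
  linarith

section Rayleigh

variable {ι : Type*} [Fintype ι] {A : Matrix ι ι ℝ} {v : ι → ℝ} {lam c : ℝ}

lemma le_eigenvalue_of_le_dotProduct_mulVec (hv : v ≠ 0) (hAv : A *ᵥ v = lam • v)
    (hc : c * (v ⬝ᵥ v) ≤ v ⬝ᵥ A *ᵥ v) : c ≤ lam := by
  rw [hAv, dotProduct_smul, smul_eq_mul] at hc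
  exact le_of_mul_le_mul_right hc (by simpa using dotProduct_star_self_pos_iff.2 hv)

lemma eigenvalue_le_of_dotProduct_mulVec_le (hv : v ≠ 0) (hAv : A *ᵥ v = lam • v)
    (hc : v ⬝ᵥ A *ᵥ v ≤ c * (v ⬝ᵥ v)) : lam ≤ c := by
  rw [hAv, dotProduct_smul, smul_eq_mul] at hc
  exact le_of_mul_le_mul_right hc (by simpa using dotProduct_star_self_pos_iff.2 hv)

end Rayleigh

section StarWord

variable {p : ℕ} (i : Fin (p + 1))

lemma starWord_cons {n : ℕ} (a : Fin (p + 1)) (t : Fin n → Fin (p + 1)) :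
    starWord p i (n + 1) (Fin.cons a t) =
      Fin.cons (Equiv.swap 0 i a) (if a = 0 then starWord p i n t else t) := by
  by_cases ha0 : a = 0
  · subst ha0; simp [starWord]
  by_cases hai : a = i
  · subst hai; simp [starWord, ha0]
  · simp [starWord, ha0, hai, Equiv.swap_apply_of_ne_of_ne ha0 hai]

lemma starWord_injective (n : ℕ) : (starWord p i n).Injective := by
  induction n with
  | zero => exact fun _ _ h => h
  | succ n ih =>
    intro u v huv
    rw [← Fin.cons_self_tail u, ← Fin.cons_self_tail v, starWord_cons, starWord_cons,
      Fin.cons_inj] at huv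
    obtain ⟨hhead, htail⟩ := huv
    have hab := (Equiv.swap 0 i).injective hhead
    rw [hab] at htail
    rw [← Fin.cons_self_tail u, ← Fin.cons_self_tail v, hab]
    split_ifs at htail
    · rw [ih htail]
    · rw [htail]

lemma starWord_bijective (n : ℕ) : (starWord p i n).Bijective :=
  Finite.injective_iff_bijective.1 (starWord_injective i n)

end StarWord

noncomputable def starForm (p n : ℕ) (x : (Fin n → Fin (p + 1)) → ℝ) : ℝ :=
  ∑ i : Fin p, ∑ u, x u * x (starWord p i.succ n u)

lemma starMat_mulVec {p n : ℕ} (i : Fin (p + 1)) (x : (Fin n → Fin (p + 1)) → ℝ)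
    (u : Fin n → Fin (p + 1)) : (starMat p n i *ᵥ x) u = x (starWord p i n u) := by
  simp [starMat, mulVec, dotProduct, ite_mul]

lemma dotProduct_starAdj_mulVec {p n : ℕ} (x : (Fin n → Fin (p + 1)) → ℝ) :
    x ⬝ᵥ starAdj p n *ᵥ x = 2 * starForm p n x := by
  have hM : ∀ i : Fin (p + 1), x ⬝ᵥ starMat p n i *ᵥ x = ∑ u, x u * x (starWord p i n u) :=
    fun i => Finset.sum_congr rfl fun u _ => by rw [starMat_mulVec]
  have hMT : ∀ i : Fin (p + 1), x ⬝ᵥ (starMat p n i)ᵀ *ᵥ x = x ⬝ᵥ starMat p n i *ᵥ x :=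
    fun i => by rw [dotProduct_mulVec, vecMul_transpose, dotProduct_comm]
  simp only [starAdj, sum_mulVec, dotProduct_sum, add_mulVec, dotProduct_add, hMT, hM,
    starForm]
  rw [Finset.mul_sum]
  simp only [two_mul]

lemma starForm_le {p n : ℕ} (x : (Fin n → Fin (p + 1)) → ℝ) :
    starForm p n x ≤ p * ∑ u, x u ^ 2 := by
  calc starForm p n x ≤ ∑ _i : Fin p, ∑ u, x u ^ 2 :=
        Finset.sum_le_sum fun i _ => sum_mul_comp_le_sum_sq (starWord_bijective _ n) x
    _ = p * ∑ u, x u ^ 2 := by simp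

lemma sum_mul_starWord_succ {p n : ℕ} {i : Fin (p + 1)} (hi : i ≠ 0)
    (x : (Fin (n + 1) → Fin (p + 1)) → ℝ) :
    ∑ u, x u * x (starWord p i (n + 1) u) = ∑ u, x u ^ 2 +
      ∑ t, (x (Fin.cons 0 t) * x (Fin.cons i (starWord p i n t)) +
        x (Fin.cons i t) * x (Fin.cons 0 t) - x (Fin.cons 0 t) ^ 2 - x (Fin.cons i t) ^ 2) := by
  rw [← sub_eq_iff_eq_add', ← Finset.sum_sub_distrib, sum_pi_fin_succ,
    Fintype.sum_eq_add 0 i hi.symm]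
  · simp only [starWord_cons, Equiv.swap_apply_left, Equiv.swap_apply_right, if_pos, if_neg hi,
      ← Finset.sum_add_distrib]
    exact Finset.sum_congr rfl fun t _ => by ring
  · rintro a ⟨ha0, hai⟩
    simp [starWord_cons, Equiv.swap_apply_of_ne_of_ne ha0 hai, ha0, sq]

lemma two_mul_mul_starForm_succ_add_sum_sq {p n : ℕ} (x : (Fin (n + 1) → Fin (p + 1)) → ℝ) :
    2 * p * (starForm p (n + 1) x + ∑ u, x u ^ 2) =
      ∑ i : Fin p, ∑ t, ((p * x (Fin.cons i.succ t) + x (Fin.cons 0 t)) ^ 2 +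
        (p * x (Fin.cons i.succ (starWord p i.succ n t)) + x (Fin.cons 0 t)) ^ 2) := by
  have hS : ∑ u, x u ^ 2 =
      ∑ t, x (Fin.cons 0 t) ^ 2 + ∑ i : Fin p, ∑ t, x (Fin.cons i.succ t) ^ 2 := by
    rw [sum_pi_fin_succ, Fin.sum_univ_succ]
  have hw : ∀ i : Fin p, ∑ t, x (Fin.cons i.succ (starWord p i.succ n t)) ^ 2 =
      ∑ t, x (Fin.cons i.succ t) ^ 2 :=
    fun i => (starWord_bijective _ n).sum_comp fun t => x (Fin.cons i.succ t) ^ 2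
  have hexpand : ∀ (a w z : ℝ), (p * z + a) ^ 2 + (p * w + a) ^ 2 =
      2 * p * (a * w + z * a - a ^ 2 - z ^ 2) + p ^ 2 * w ^ 2 - p ^ 2 * z ^ 2 +
        2 * p * (p + 1) * z ^ 2 + 2 * (p + 1) * a ^ 2 := fun a w z => by ring
  simp only [starForm, sum_mul_starWord_succ (Fin.succ_ne_zero _), hexpand,
    Finset.sum_add_distrib, Finset.sum_sub_distrib, ← Finset.mul_sum, hw, Finset.sum_const,
    Finset.card_univ, Fintype.card_fin, nsmul_eq_mul]
  rw [hS]
  ring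

lemma dotProduct_starAdj_mulVec_le {p n : ℕ} (x : (Fin n → Fin (p + 1)) → ℝ) :
    x ⬝ᵥ starAdj p n *ᵥ x ≤ 2 * p * (x ⬝ᵥ x) := by
  rw [dotProduct_starAdj_mulVec, mul_assoc]
  simpa only [dotProduct, sq] using mul_le_mul_of_nonneg_left (starForm_le x) zero_le_two

lemma neg_two_mul_le_dotProduct_starAdj_mulVec {p n : ℕ} (hp : 0 < p)
    (x : (Fin (n + 1) → Fin (p + 1)) → ℝ) :
    -2 * (x ⬝ᵥ x) ≤ x ⬝ᵥ starAdj p (n + 1) *ᵥ x := by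
  have hsos : 0 ≤ 2 * p * (starForm p (n + 1) x + ∑ u, x u ^ 2) := by
    rw [two_mul_mul_starForm_succ_add_sum_sq]
    positivity
  have hp' : (0 : ℝ) < 2 * p := by positivity
  have := (mul_nonneg_iff_of_pos_left hp').1 hsos
  rw [dotProduct_starAdj_mulVec]
  simp only [dotProduct, ← sq]
  linarith

/-- For every `p ≥ 1` and `n ≥ 1`, every real eigenvalue `λ` of the adjacency matrix `A_n`
of the `n`-th Schreier graph of `𝒢_{S_p}` satisfies `−2 ≤ λ ≤ 2p`. -/
theorem stmt9 (p : ℕ) (hp : 1 ≤ p) (n : ℕ) (hn : 1 ≤ n) (lam : ℝ)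
    (h : ∃ v : (Fin n → Fin (p + 1)) → ℝ, v ≠ 0 ∧ (starAdj p n).mulVec v = lam • v) :
    -2 ≤ lam ∧ lam ≤ 2 * p := by
  obtain ⟨v, hv, hAv⟩ := h
  obtain ⟨m, rfl⟩ : ∃ m, n = m + 1 := ⟨n - 1, by omega⟩
  exact ⟨le_eigenvalue_of_le_dotProduct_mulVec hv hAv
      (neg_two_mul_le_dotProduct_starAdj_mulVec hp v),
    eigenvalue_le_of_dotProduct_mulVec_le hv hAv (dotProduct_starAdj_mulVec_le v)⟩
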